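/- arXiv:2105.01138 — 2 statements merged into one kernel-verified Lean document; each statement's English description precedes it below -/
import Mathlib

section
/- Every unweighted graph G=(V,E) has a k-stable cut S (i.e., for every vertex v, d_S(v) > (d(v)−k)/2) that is an optimal k-adaptive-fault-tolerant cut, i.e., φ(S,k) = max over all cuts S' of φ(S',k). -/
open Finset

noncomputable section

variable {V : Type*} [Fintype V] [DecidableEq V]

/-- Total weight of edges crossing the cut `S` (each unordered crossing edge counted once). -/
def cutW (w : V → V → ℝ) (S : Finset V) : ℝ :=
  ∑ u ∈ S, ∑ v ∈ Sᶜ, w u v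

/-- Weighted degree of a vertex. -/
def degW (w : V → V → ℝ) (v : V) : ℝ := ∑ u, w v u

/-- Total weight of crossing edges incident to `v`. -/
def crossDegW (w : V → V → ℝ) (S : Finset V) (v : V) : ℝ :=
  ∑ u, if (v ∈ S ∧ u ∉ S) ∨ (u ∈ S ∧ v ∉ S) then w v u else 0

/-- Total weight of crossing edges incident to at least one vertex of `F`. -/
def crossDegSetW (w : V → V → ℝ) (S F : Finset V) : ℝ :=
  ∑ u ∈ S, ∑ v ∈ Sᶜ, if u ∈ F ∨ v ∈ F then w u v else 0

/-- Weight of edges crossing `S` that avoid `F`: the cut `S − F` in `G − F`. -/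
def cutMinusW (w : V → V → ℝ) (S F : Finset V) : ℝ :=
  ∑ u ∈ S, ∑ v ∈ Sᶜ, if u ∉ F ∧ v ∉ F then w u v else 0

/-- The cut obtained from `S` by moving `v` to the opposite side. -/
def flipCut (S : Finset V) (v : V) : Finset V :=
  if v ∈ S then S.erase v else insert v S

/-- The k-fault-tolerant value of the cut `S` against an adaptive adversary. -/
noncomputable def ftValW (w : V → V → ℝ) (S : Finset V) (k : ℕ) : ℝ :=
  sInf ((fun F => cutMinusW w S F) '' {F : Finset V | F.card = k})

/-- The single-fault FT value of the cut `S`. -/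
noncomputable def ft1W (w : V → V → ℝ) (S : Finset V) : ℝ :=
  sInf (Set.range fun v => cutMinusW w S {v})

/-- Total edge weight of the graph. -/
def totalW (w : V → V → ℝ) : ℝ := (∑ u, ∑ v, w u v) / 2

/-- Maximum weighted degree. -/
noncomputable def maxDegW (w : V → V → ℝ) : ℝ := sSup (Set.range (degW w))

/-! Among the cuts of optimal `k`-FT value take one of maximum size. Moving a vertex `v` with
`d_S(v) ≤ (d(v) − k)/2` changes the cut by `d(v) − 2 d_S(v) ≥ k > 0`, and in every `G − F` with
`|F| = k` the same move is still non-decreasing, since deleting `F` lowers `d(v)` by at most `k` and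
does not raise `d_S(v)`. So the move would keep the FT value optimal while enlarging the cut. -/

/-- `G − F` as a weight function on all of `V`: the edges meeting `F` get weight `0`. -/
def removeW (w : V → V → ℝ) (F : Finset V) (u x : V) : ℝ :=
  if u ∉ F ∧ x ∉ F then w u x else 0

lemma cutMinusW_eq_cutW_removeW (w : V → V → ℝ) (S F : Finset V) :
    cutMinusW w S F = cutW (removeW w F) S := rfl

lemma crossDegW_of_mem (w : V → V → ℝ) {S : Finset V} {v : V} (hv : v ∈ S) :
    crossDegW w S v = ∑ x ∈ Sᶜ, w v x := by
  rw [crossDegW, ← sum_filter]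
  congr 1
  ext x
  simp [hv]

lemma crossDegW_of_notMem (w : V → V → ℝ) {S : Finset V} {v : V} (hv : v ∉ S) :
    crossDegW w S v = ∑ x ∈ S, w v x := by
  rw [crossDegW, ← sum_filter]
  congr 1
  ext x
  simp [hv]

lemma crossDegW_flipCut_add (w : V → V → ℝ) (hdiag : ∀ v, w v v = 0) (S : Finset V) (v : V) :
    crossDegW w (flipCut S v) v + crossDegW w S v = degW w v := by
  rw [crossDegW, crossDegW, degW, ← sum_add_distrib]
  refine sum_congr rfl fun x _ => ?_
  by_cases hx : x = v
  · subst hx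
    simp [hdiag]
  · by_cases hv : v ∈ S <;> by_cases hxS : x ∈ S <;> simp [flipCut, hv, hxS, hx]

lemma cutW_insert_sub (w : V → V → ℝ) (hsym : ∀ u v, w u v = w v u) {S : Finset V} {v : V}
    (hv : v ∉ S) :
    cutW w (insert v S) - cutW w S = crossDegW w (insert v S) v - crossDegW w S v := by
  have hcompl : v ∈ Sᶜ := mem_compl.2 hv
  have hrow : ∀ u, ∑ x ∈ Sᶜ, w u x = w u v + ∑ x ∈ (insert v S)ᶜ, w u x := fun u => by
    rw [compl_insert, add_sum_erase _ _ hcompl]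
  rw [crossDegW_of_mem w (mem_insert_self v S), crossDegW_of_notMem w hv, cutW, cutW,
    sum_insert hv, sum_congr rfl fun u _ => hrow u, sum_add_distrib]
  simp only [hsym _ v]
  ring

lemma cutW_flipCut_sub (w : V → V → ℝ) (hsym : ∀ u v, w u v = w v u) (hdiag : ∀ v, w v v = 0)
    (S : Finset V) (v : V) :
    cutW w (flipCut S v) - cutW w S = degW w v - 2 * crossDegW w S v := by
  have hcross := crossDegW_flipCut_add w hdiag S v
  suffices cutW w (flipCut S v) - cutW w S = crossDegW w (flipCut S v) v - crossDegW w S v by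
    linarith
  by_cases hv : v ∈ S
  · have hflip : flipCut S v = S.erase v := if_pos hv
    have h := cutW_insert_sub w hsym (notMem_erase v S)
    rw [insert_erase hv, ← hflip] at h
    linarith
  · rw [show flipCut S v = insert v S from if_neg hv]
    exact cutW_insert_sub w hsym hv

lemma degW_sub_card_le_degW_removeW (w : V → V → ℝ) (hw1 : ∀ u x, w u x ≤ 1) {F : Finset V}
    {v : V} (hv : v ∉ F) : degW w v - #F ≤ degW (removeW w F) v := by
  have hF : ∑ x ∈ F, w v x ≤ #F := by
    simpa using sum_le_card_nsmul F (w v) 1 fun x _ => hw1 v x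
  have hrem : degW (removeW w F) v = ∑ x ∈ Fᶜ, w v x := by
    simp only [degW, removeW, hv, not_false_eq_true, true_and]
    rw [← sum_filter, filter_not, filter_mem_eq_inter, univ_inter, compl_eq_univ_sdiff]
  rw [hrem, degW, ← sum_add_sum_compl F]
  linarith

lemma crossDegW_removeW_le (w : V → V → ℝ) (hw0 : ∀ u x, 0 ≤ w u x) (S F : Finset V) (v : V) :
    crossDegW (removeW w F) S v ≤ crossDegW w S v := by
  refine sum_le_sum fun x _ => ?_
  unfold removeW
  split_ifs <;> simp [hw0]

lemma cutMinusW_le_cutMinusW_flipCut (w : V → V → ℝ) (hsym : ∀ u v, w u v = w v u)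
    (hdiag : ∀ v, w v v = 0) (hw0 : ∀ u x, 0 ≤ w u x) (hw1 : ∀ u x, w u x ≤ 1)
    {S F : Finset V} {v : V} (hgreedy : crossDegW w S v ≤ (degW w v - #F) / 2) :
    cutMinusW w S F ≤ cutMinusW w (flipCut S v) F := by
  have hsymF : ∀ u x, removeW w F u x = removeW w F x u := fun u x => by
    simp only [removeW, hsym u x, and_comm]
  have hdiagF : ∀ x, removeW w F x x = 0 := fun x => by simp [removeW, hdiag]
  rw [cutMinusW_eq_cutW_removeW, cutMinusW_eq_cutW_removeW, ← sub_nonneg,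
    cutW_flipCut_sub _ hsymF hdiagF]
  by_cases hv : v ∈ F
  · simp [degW, crossDegW, removeW, hv]
  · linarith [degW_sub_card_le_degW_removeW w hw1 hv, crossDegW_removeW_le w hw0 S F v]

lemma cutW_add_le_cutW_flipCut (w : V → V → ℝ) (hsym : ∀ u v, w u v = w v u)
    (hdiag : ∀ v, w v v = 0) {S : Finset V} {v : V} {k : ℝ}
    (hgreedy : crossDegW w S v ≤ (degW w v - k) / 2) :
    cutW w S + k ≤ cutW w (flipCut S v) := by
  linarith [cutW_flipCut_sub w hsym hdiag S v]

lemma ftValW_mono (w : V → V → ℝ) {S S' : Finset V} {k : ℕ}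
    (h : ∀ F : Finset V, #F = k → cutMinusW w S F ≤ cutMinusW w S' F) :
    ftValW w S k ≤ ftValW w S' k := by
  rw [ftValW, ftValW, sInf_image', sInf_image']
  exact ciInf_mono (Set.finite_range _).bddBelow fun F => h F F.2

theorem stmt_3_general (w : V → V → ℝ) (hsym : ∀ u v, w u v = w v u)
    (h01 : ∀ u v, w u v = 0 ∨ w u v = 1) (hdiag : ∀ v, w v v = 0)
    (k : ℕ) (hk : 0 < k) :
    ∃ S : Finset V, (∀ v, (degW w v - k) / 2 < crossDegW w S v) ∧
      ∀ S' : Finset V, ftValW w S' k ≤ ftValW w S k := by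
  have hw0 : ∀ u x, 0 ≤ w u x := fun u x => by rcases h01 u x with h | h <;> simp [h]
  have hw1 : ∀ u x, w u x ≤ 1 := fun u x => by rcases h01 u x with h | h <;> simp [h]
  obtain ⟨S₀, -, hS₀⟩ := exists_max_image univ (ftValW w · k) univ_nonempty
  obtain ⟨S, hS, hSmax⟩ := exists_max_image
    {S | ∀ S' : Finset V, ftValW w S' k ≤ ftValW w S k} (cutW w) ⟨S₀, by simpa using hS₀⟩
  simp only [mem_filter, mem_univ, true_and] at hS hSmax
  refine ⟨S, fun v => ?_, hS⟩
  by_contra! hgreedy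
  have hft : ftValW w S k ≤ ftValW w (flipCut S v) k :=
    ftValW_mono w fun F hF =>
      cutMinusW_le_cutMinusW_flipCut w hsym hdiag hw0 hw1 (by rwa [hF])
  have hgrow := cutW_add_le_cutW_flipCut w hsym hdiag hgreedy
  have hle := hSmax (flipCut S v) fun T => (hS T).trans hft
  have hkpos : (0 : ℝ) < k := by exact_mod_cast hk
  linarith

theorem stmt_3 (w : V → V → ℝ) (hsym : ∀ u v, w u v = w v u)
    (h01 : ∀ u v, w u v = 0 ∨ w u v = 1) (hdiag : ∀ v, w v v = 0)
    (k : ℕ) (hk : 0 < k) (hkcard : k ≤ Fintype.card V) :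
    ∃ S : Finset V, (∀ v, (degW w v - k) / 2 < crossDegW w S v) ∧
      ∀ S' : Finset V, ftValW w S' k ≤ ftValW w S k :=
  stmt_3_general w hsym h01 hdiag k hk
end
end

section
/- With G' constructed from G by adding a star with center u* and n leaves plus an edge {u*,v_1}: the optimal single-fault adaptive FT value in G' equals the maximum cut value in G, i.e., max_{S'⊆V'} φ(S',G') = max_{S⊆V} C_{S,G}. -/
open Finset

noncomputable section

variable {V : Type*} [Fintype V] [DecidableEq V]

/-- The graph `G'` obtained from `G` (given by weights `w` on `V`) by adding a star
with center `u* = Sum.inr none`, leaves `u_i = Sum.inr (some i)` for `i : V`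
(`n = |V|` leaves), and one extra edge from `u*` to the fixed vertex `v1 ∈ V`. -/
def wExt (w : V → V → ℝ) (v1 : V) : (V ⊕ Option V) → (V ⊕ Option V) → ℝ
  | Sum.inl a, Sum.inl b => w a b
  | Sum.inl a, Sum.inr none => if a = v1 then 1 else 0
  | Sum.inr none, Sum.inl a => if a = v1 then 1 else 0
  | Sum.inl _, Sum.inr (some _) => 0
  | Sum.inr (some _), Sum.inl _ => 0
  | Sum.inr none, Sum.inr (some _) => 1
  | Sum.inr (some _), Sum.inr none => 1
  | Sum.inr none, Sum.inr none => 0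
  | Sum.inr (some _), Sum.inr (some _) => 0

/-
Deleting the centre `u*` of the star leaves exactly `G` with the cut `S' ∩ V`, so no cut of `G'`
has fault-tolerant value above the maximum cut of `G`. Conversely, for a cut `S` of `G` take
`S ∪ {u*}`, with all leaves on the other side. Deleting `u*` or a leaf destroys no edge of `G`;
deleting a vertex of `G` destroys at most `n` crossing edges of `G` (edges have weight at most 1),
but the `n` crossing star edges `u* u_i` survive. So the value of `S ∪ {u*}` is at least `C_S`.
-/

theorem cutW_eq_cutMinusW_add_crossDegSetW (w : V → V → ℝ) (S F : Finset V) :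
    cutW w S = cutMinusW w S F + crossDegSetW w S F := by
  simp only [cutW, cutMinusW, crossDegSetW, ← sum_add_distrib]
  refine sum_congr rfl fun u _ => sum_congr rfl fun v _ => ?_
  by_cases hu : u ∈ F <;> by_cases hv : v ∈ F <;> simp [hu, hv]

theorem crossDegSetW_singleton (w : V → V → ℝ) (S : Finset V) (a : V) :
    crossDegSetW w S {a} = if a ∈ S then ∑ v ∈ Sᶜ, w a v else ∑ u ∈ S, w u a := by
  unfold crossDegSetW
  split_ifs with ha
  · calc _ = ∑ u ∈ S, if u = a then ∑ v ∈ Sᶜ, w u v else 0 := by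
          refine sum_congr rfl fun u _ => ?_
          split_ifs with hua
          · exact sum_congr rfl fun v _ => if_pos (Or.inl (mem_singleton.2 hua))
          · refine sum_eq_zero fun v hv => if_neg ?_
            rintro (h | h) <;> simp_all
      _ = _ := by rw [sum_ite_eq', if_pos ha]
  · refine sum_congr rfl fun u hu => ?_
    calc _ = ∑ v ∈ Sᶜ, if v = a then w u v else 0 := by
          refine sum_congr rfl fun v _ => ?_
          simp only [mem_singleton, show u ≠ a by rintro rfl; exact ha hu, false_or]
      _ = w u a := by rw [sum_ite_eq', if_pos (mem_compl.2 ha)]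

theorem crossDegSetW_singleton_le_card (w : V → V → ℝ) (hw1 : ∀ u v, w u v ≤ 1)
    (S : Finset V) (a : V) :
    crossDegSetW w S {a} ≤ Fintype.card V := by
  have key : ∀ (T : Finset V) (f : V → ℝ), (∀ v, f v ≤ 1) →
      ∑ v ∈ T, f v ≤ Fintype.card V := fun T f hf =>
    (sum_le_card_nsmul T f 1 fun v _ => hf v).trans <| by simpa using T.card_le_univ
  rw [crossDegSetW_singleton]
  split_ifs
  · exact key _ _ (hw1 a)
  · exact key _ _ (hw1 · a)

theorem cutMinusW_eq_sum_univ (w : V → V → ℝ) (S F : Finset V) :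
    cutMinusW w S F =
      ∑ u, ∑ v, if u ∈ S ∧ v ∉ S ∧ u ∉ F ∧ v ∉ F then w u v else 0 := by
  rw [cutMinusW, ← Fintype.sum_ite_mem]
  refine sum_congr rfl fun u _ => ?_
  by_cases hu : u ∈ S
  · rw [if_pos hu, ← Fintype.sum_ite_mem]
    simp only [mem_compl, hu, true_and, ite_and]
  · simp [hu]

theorem cutMinusW_empty (w : V → V → ℝ) (S : Finset V) : cutMinusW w S ∅ = cutW w S := by
  simp [cutMinusW, cutW]

theorem ft1W_le_cutMinusW (w : V → V → ℝ) (S : Finset V) (v : V) :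
    ft1W w S ≤ cutMinusW w S {v} :=
  csInf_le (Set.finite_range _).bddBelow ⟨v, rfl⟩

theorem le_ft1W [Nonempty V] {w : V → V → ℝ} {S : Finset V} {c : ℝ}
    (h : ∀ v, c ≤ cutMinusW w S {v}) : c ≤ ft1W w S :=
  le_csInf (Set.range_nonempty _) (Set.forall_mem_range.2 h)

section wExt

variable (w : V → V → ℝ) (v1 : V)

theorem cutMinusW_wExt_center (S' : Finset (V ⊕ Option V)) :
    cutMinusW (wExt w v1) S' {.inr none} = cutW w S'.toLeft := by
  rw [← cutMinusW_empty, cutMinusW_eq_sum_univ, cutMinusW_eq_sum_univ]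
  simp [Fintype.sum_sum_type, Fintype.sum_option, wExt]

theorem cutW_le_cutMinusW_wExt_leaf (S : Finset V) (j : V) :
    cutW w S ≤ cutMinusW (wExt w v1) (S.disjSum {none}) {.inr (some j)} := by
  -- the surviving star edges: `u* v1` if `v1 ∉ S`, and `u* u_i` for `i ≠ j`
  calc cutW w S ≤ cutW w S + ((∑ a : V, if a ∈ S then (0 : ℝ) else if a = v1 then 1 else 0)
          + ∑ i : V, if i = j then (0 : ℝ) else 1) :=
        le_add_of_nonneg_right <| add_nonneg
          (sum_nonneg fun _ _ => by split_ifs <;> norm_num)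
          (sum_nonneg fun _ _ => by split_ifs <;> norm_num)
    _ = _ := by
      rw [← cutMinusW_empty, cutMinusW_eq_sum_univ, cutMinusW_eq_sum_univ]
      simp [Fintype.sum_sum_type, Fintype.sum_option, wExt]

theorem cutMinusW_add_card_le_cutMinusW_wExt_base (S : Finset V) (a : V) :
    cutMinusW w S {a} + Fintype.card V
      ≤ cutMinusW (wExt w v1) (S.disjSum {none}) {.inl a} := by
  -- the surviving star edges: `u* v1` if `v1 ∉ S ∪ {a}`, and all `n` edges `u* u_i`
  calc cutMinusW w S {a} + Fintype.card V
        ≤ cutMinusW w S {a}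
          + ((∑ b : V, if b ∉ S ∧ b ≠ a then if b = v1 then (1 : ℝ) else 0 else 0)
            + Fintype.card V) := by
        gcongr
        exact le_add_of_nonneg_left (sum_nonneg fun _ _ => by split_ifs <;> norm_num)
    _ = _ := by
      rw [cutMinusW_eq_sum_univ, cutMinusW_eq_sum_univ]
      simp [Fintype.sum_sum_type, Fintype.sum_option, wExt]

theorem ft1W_wExt_le_cutW_toLeft (S' : Finset (V ⊕ Option V)) :
    ft1W (wExt w v1) S' ≤ cutW w S'.toLeft :=
  (ft1W_le_cutMinusW _ S' _).trans_eq (cutMinusW_wExt_center w v1 S')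

theorem cutW_le_ft1W_wExt (hw1 : ∀ u v, w u v ≤ 1) (S : Finset V) :
    cutW w S ≤ ft1W (wExt w v1) (S.disjSum {none}) := by
  refine le_ft1W ?_
  rintro (a | _ | j)
  · calc cutW w S = cutMinusW w S {a} + crossDegSetW w S {a} :=
          cutW_eq_cutMinusW_add_crossDegSetW w S {a}
      _ ≤ cutMinusW w S {a} + Fintype.card V := by
          gcongr; exact crossDegSetW_singleton_le_card w hw1 S a
      _ ≤ _ := cutMinusW_add_card_le_cutMinusW_wExt_base w v1 S a
  · simp [cutMinusW_wExt_center]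
  · exact cutW_le_cutMinusW_wExt_leaf w v1 S j

end wExt

theorem stmt_15_general (w : V → V → ℝ)
    (h01 : ∀ u v, w u v = 0 ∨ w u v = 1)
    (v1 : V) :
    sSup (Set.range fun S' : Finset (V ⊕ Option V) => ft1W (wExt w v1) S')
      = sSup (Set.range fun S : Finset V => cutW w S) := by
  have hw1 : ∀ u v, w u v ≤ 1 := fun u v => by rcases h01 u v with h | h <;> simp [h]
  apply le_antisymm
  · refine csSup_le (Set.range_nonempty _) (Set.forall_mem_range.2 fun S' => ?_)
    exact (ft1W_wExt_le_cutW_toLeft w v1 S').trans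
      (le_csSup (Set.finite_range _).bddAbove ⟨_, rfl⟩)
  · refine csSup_le (Set.range_nonempty _) (Set.forall_mem_range.2 fun S => ?_)
    exact (cutW_le_ft1W_wExt w v1 hw1 S).trans
      (le_csSup (Set.finite_range _).bddAbove ⟨_, rfl⟩)

theorem stmt_15 (w : V → V → ℝ) (hsym : ∀ u v, w u v = w v u)
    (h01 : ∀ u v, w u v = 0 ∨ w u v = 1) (hdiag : ∀ v, w v v = 0)
    (v1 : V) :
    sSup (Set.range fun S' : Finset (V ⊕ Option V) => ft1W (wExt w v1) S')
      = sSup (Set.range fun S : Finset V => cutW w S) :=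
  stmt_15_general w h01 v1
end
end
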